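/- Let n ≥ 1, let f be structure constants, and let γ : ℝ^n → Mat_n(ℝ) be continuously differentiable such that γ(A) − M(A) is invertible for every A; set ρ(A) := (γ(A) − M(A))^{−1}. Assume: (i) for all A and all indices b,r,s: ∂ρ^r_b/∂A_s(A) − ∂ρ^s_b/∂A_r(A) = Σ_{l,q} f^{lq}_b ρ^s_l(A) ρ^r_q(A); (ii) for all A and all indices p,s,b: −Σ_{r,j} f^{pj}_r A_j ∂ρ^s_b/∂A_r(A) = Σ_q f^{ps}_q ρ^q_b(A) − Σ_l f^{pl}_b ρ^s_l(A). Then for every smooth A : ℝ^n → ℝ^n, every x ∈ ℝ^n and every index b: Σ_{l,a} ∂_l(γ^l_a(A(x)) ρ^a_b(A(x))) = −(1/2) Σ_{r,t,q,l,p} f^{rt}_b ρ^q_r(A(x)) ρ^l_t(A(x)) (γ^p_q(A(x)) ∂_p A_l(x) − γ^p_l(A(x)) ∂_p A_q(x)). -/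

import Mathlib

set_option autoImplicit false
set_option maxHeartbeats 1000000

open scoped BigOperators

/-- Partial derivative `∂_a u (x)` of `u : ℝⁿ → ℝ`. -/
noncomputable def pd {n : ℕ} (a : Fin n) (u : (Fin n → ℝ) → ℝ) (x : Fin n → ℝ) : ℝ :=
  fderiv ℝ u x (Pi.single a 1)

/-- Structure constants: antisymmetry and Jacobi identity. -/
def IsStructureConstants {n : ℕ} (f : Fin n → Fin n → Fin n → ℝ) : Prop :=
  (∀ a b c, f a b c = - f b a c) ∧
  (∀ i j k a, ∑ l, (f k l i * f j a l + f j l i * f a k l + f a l i * f k j l) = 0)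

/-- The matrix `M(A)` with entries `M(A)^s_l = Σ_i f^{is}_l A_i` (upper index = row). -/
def Mmat {n : ℕ} (f : Fin n → Fin n → Fin n → ℝ) (A : Fin n → ℝ) :
    Matrix (Fin n) (Fin n) ℝ := fun s l => ∑ i, f i s l * A i

section AuxAnalysis
variable {n : ℕ}

lemma contDiff_finprod' {ι : Type*} (s : Finset ι) (g : ι → (Fin n → ℝ) → ℝ)
    (h : ∀ i, ContDiff ℝ 1 (g i)) : ContDiff ℝ 1 (fun x => ∏ i ∈ s, g i x) := by
  classical
  induction s using Finset.induction with
  | empty => simpa using contDiff_const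
  | insert _ _ hx ih =>
    simp only [Finset.prod_insert hx]
    exact (h _).mul ih

lemma contDiff_det' (m : (Fin n → ℝ) → Matrix (Fin n) (Fin n) ℝ)
    (hm : ∀ i j, ContDiff ℝ 1 (fun C => m C i j)) :
    ContDiff ℝ 1 (fun C => (m C).det) := by
  have h : ∀ C, (m C).det = ∑ σ : Equiv.Perm (Fin n),
      (Equiv.Perm.sign σ : ℝ) * ∏ i, m C (σ i) i := by
    intro C; rw [Matrix.det_apply']
  simp only [h]
  exact ContDiff.sum fun σ _ => contDiff_const.mul (contDiff_finprod' _ _ fun i => hm _ _)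

lemma pd_sum' {ι : Type*} (l : Fin n) (s : Finset ι) (g : ι → (Fin n → ℝ) → ℝ) (x : Fin n → ℝ)
    (h : ∀ i ∈ s, DifferentiableAt ℝ (g i) x) :
    pd l (fun y => ∑ i ∈ s, g i y) x = ∑ i ∈ s, pd l (g i) x := by
  unfold pd
  rw [fderiv_fun_sum h]
  simp

lemma pd_mul' (l : Fin n) (u v : (Fin n → ℝ) → ℝ) (x : Fin n → ℝ)
    (hu : DifferentiableAt ℝ u x) (hv : DifferentiableAt ℝ v x) :
    pd l (fun y => u y * v y) x = pd l u x * v x + u x * pd l v x := by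
  unfold pd
  rw [fderiv_fun_mul hu hv]
  simp only [ContinuousLinearMap.add_apply, ContinuousLinearMap.smul_apply, smul_eq_mul]
  ring

lemma pd_const_add' (l : Fin n) (c : ℝ) (u : (Fin n → ℝ) → ℝ) (x : Fin n → ℝ) :
    pd l (fun y => c + u y) x = pd l u x := by
  unfold pd; rw [fderiv_const_add]

lemma pd_linear' (p : Fin n) (c : Fin n → ℝ) (B : Fin n → ℝ) :
    pd p (fun C => ∑ i, c i * C i) B = c p := by
  have h : HasFDerivAt (fun C : Fin n → ℝ => ∑ i, c i * C i)
      (∑ i, c i • (ContinuousLinearMap.proj i : (Fin n → ℝ) →L[ℝ] ℝ)) B := by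
    apply HasFDerivAt.fun_sum
    intro i _
    have h0 : HasFDerivAt (fun C : Fin n → ℝ => C i)
        (ContinuousLinearMap.proj i : (Fin n → ℝ) →L[ℝ] ℝ) B :=
      (ContinuousLinearMap.proj i : (Fin n → ℝ) →L[ℝ] ℝ).hasFDerivAt
    exact h0.const_mul (c i)
  unfold pd
  rw [h.fderiv]
  simp [ContinuousLinearMap.sum_apply, Pi.single_apply]

lemma contDiff_coord' (i : Fin n) : ContDiff ℝ 1 (fun C : Fin n → ℝ => C i) :=
  (ContinuousLinearMap.proj i : (Fin n → ℝ) →L[ℝ] ℝ).contDiff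

lemma pd_comp' (l : Fin n) (g : (Fin n → ℝ) → ℝ) (A : (Fin n → ℝ) → Fin n → ℝ)
    (x : Fin n → ℝ) (hg : DifferentiableAt ℝ g (A x)) (hA : DifferentiableAt ℝ A x) :
    pd l (fun y => g (A y)) x = ∑ p, pd p g (A x) * pd l (fun y => A y p) x := by
  have hcomp : fderiv ℝ (fun y => g (A y)) x
      = (fderiv ℝ g (A x)).comp (fderiv ℝ A x) := fderiv_comp x hg hA
  have hproj : ∀ p, pd l (fun y => A y p) x = (fderiv ℝ A x (Pi.single l 1)) p := by
    intro p
    have h1 : HasFDerivAt (fun y => A y p)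
        ((ContinuousLinearMap.proj p : (Fin n → ℝ) →L[ℝ] ℝ).comp (fderiv ℝ A x)) x :=
      ((ContinuousLinearMap.proj p : (Fin n → ℝ) →L[ℝ] ℝ).hasFDerivAt).comp x
        hA.hasFDerivAt
    unfold pd
    rw [h1.fderiv]
    rfl
  unfold pd
  rw [hcomp]
  set v := fderiv ℝ A x (Pi.single l 1) with hv
  have hvdec : v = ∑ p, v p • (Pi.single p 1 : Fin n → ℝ) := by
    funext k
    simp [Pi.single_apply]
  calc (fderiv ℝ g (A x)).comp (fderiv ℝ A x) (Pi.single l 1)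
      = fderiv ℝ g (A x) v := rfl
    _ = fderiv ℝ g (A x) (∑ p, v p • (Pi.single p 1 : Fin n → ℝ)) := by rw [← hvdec]
    _ = ∑ p, v p * fderiv ℝ g (A x) (Pi.single p 1) := by
        rw [map_sum]; simp [smul_eq_mul]
    _ = ∑ p, pd p g (A x) * pd l (fun y => A y p) x := by
        refine Finset.sum_congr rfl fun p _ => ?_
        rw [hproj p]; unfold pd; ring

end AuxAnalysis

section Alg
variable {n : ℕ}

abbrev Q5 (n : ℕ) := Fin n × Fin n × Fin n × Fin n × Fin n

lemma nest5' (g : Fin n → Fin n → Fin n → Fin n → Fin n → ℝ) :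
    ∑ a, ∑ c, ∑ d, ∑ e, ∑ k, g a c d e k
      = ∑ z : Q5 n, g z.1 z.2.1 z.2.2.1 z.2.2.2.1 z.2.2.2.2 := by
  simp only [Fintype.sum_prod_type]

lemma algebra_step' (f : Fin n → Fin n → Fin n → ℝ)
    (hanti : ∀ a b c, f a b c = - f b a c)
    (B : Fin n → ℝ) (G R : Matrix (Fin n) (Fin n) ℝ)
    (D : Fin n → Fin n → Fin n → ℝ) (E : Fin n → Fin n → ℝ) (b : Fin n)
    (h1 : ∀ b r s, D s r b - D r s b = ∑ l, ∑ q, f l q b * R s l * R r q)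
    (h2 : ∀ p s b, -(∑ r, ∑ j, f p j r * B j * D r s b)
        = (∑ q, f p s q * R q b) - ∑ l, f p l b * R s l)
    (h3 : ∀ l q, ∑ a, (G l a - Mmat f B l a) * R a q = if l = q then (1:ℝ) else 0) :
    ∑ l, ∑ p, (∑ a, (f p l a * R a b + Mmat f B l a * D p a b)) * E l p
      = -(1/2) * ∑ r, ∑ t, ∑ q, ∑ l, ∑ p, f r t b * R q r * R l t *
          (G p q * E p l - G p l * E p q) := by
  have hGR : ∀ l q, ∑ a, Mmat f B l a * R a q
      = (∑ a, G l a * R a q) - (if l = q then (1:ℝ) else 0) := by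
    intro l q
    have h := h3 l q
    have e : ∑ a, (G l a - Mmat f B l a) * R a q
        = (∑ a, G l a * R a q) - ∑ a, Mmat f B l a * R a q := by
      rw [← Finset.sum_sub_distrib]
      exact Finset.sum_congr rfl fun a _ => by ring
    rw [e] at h
    linarith
  have stepA : ∀ l p, (∑ a, (f p l a * R a b + Mmat f B l a * D p a b))
      = ∑ l', ∑ q, ∑ a, f l' q b * R p l' * (G l a * R a q) := by
    intro l p
    have hD : ∀ a, D p a b = D a p b + ∑ l', ∑ q, f l' q b * R p l' * R a q := by
      intro a; have := h1 b a p; linarith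
    have e2 : ∑ a, Mmat f B l a * D a p b
        = (∑ q, f l p q * R q b) - ∑ l', f l l' b * R p l' := by
      rw [← h2 l p b]
      have key : ∀ a : Fin n, Mmat f B l a * D a p b
          = -(∑ j, f l j a * B j * D a p b) := by
        intro a
        show (∑ i, f i l a * B i) * D a p b = _
        rw [← Finset.sum_neg_distrib, Finset.sum_mul]
        exact Finset.sum_congr rfl fun j _ => by rw [hanti j l a]; ring
      simp only [key, ← Finset.sum_neg_distrib]
    have e3 : ∑ a, Mmat f B l a * (∑ l', ∑ q, f l' q b * R p l' * R a q)
        = (∑ l', ∑ q, ∑ a, f l' q b * R p l' * (G l a * R a q))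
          - ∑ l', f l' l b * R p l' := by
      have swap : ∑ a, Mmat f B l a * (∑ l', ∑ q, f l' q b * R p l' * R a q)
          = ∑ l', ∑ q, (f l' q b * R p l') * (∑ a, Mmat f B l a * R a q) := by
        have s1 : ∑ a, Mmat f B l a * (∑ l', ∑ q, f l' q b * R p l' * R a q)
            = ∑ a, ∑ l', ∑ q, Mmat f B l a * (f l' q b * R p l' * R a q) := by
          refine Finset.sum_congr rfl fun a _ => ?_
          rw [Finset.mul_sum]
          exact Finset.sum_congr rfl fun l' _ => by rw [Finset.mul_sum]
        rw [s1, Finset.sum_comm]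
        refine Finset.sum_congr rfl fun l' _ => ?_
        rw [Finset.sum_comm]
        refine Finset.sum_congr rfl fun q _ => ?_
        rw [Finset.mul_sum]
        exact Finset.sum_congr rfl fun a _ => by ring
      rw [swap]
      have key2 : ∀ l' q : Fin n, (f l' q b * R p l') * (∑ a, Mmat f B l a * R a q)
          = (∑ a, f l' q b * R p l' * (G l a * R a q))
            - (if l = q then f l' q b * R p l' else 0) := by
        intro l' q
        rw [hGR l q, mul_sub, Finset.mul_sum]
        congr 1
        by_cases h : l = q <;> simp [h]
      simp only [key2]
      rw [← Finset.sum_sub_distrib]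
      refine Finset.sum_congr rfl fun l' _ => ?_
      rw [Finset.sum_sub_distrib]
      congr 1
      rw [Finset.sum_ite_eq]
      simp
    have split : ∑ a, (f p l a * R a b + Mmat f B l a * D p a b)
        = (∑ a, f p l a * R a b) + ((∑ a, Mmat f B l a * D a p b)
          + ∑ a, Mmat f B l a * (∑ l', ∑ q, f l' q b * R p l' * R a q)) := by
      rw [← Finset.sum_add_distrib, ← Finset.sum_add_distrib]
      refine Finset.sum_congr rfl fun a _ => ?_
      rw [hD a]; ring
    rw [split, e2, e3]
    have c1 : ∑ a, f p l a * R a b = -∑ q, f l p q * R q b := by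
      rw [← Finset.sum_neg_distrib]
      exact Finset.sum_congr rfl fun a _ => by rw [hanti p l a]; ring
    have c2 : ∑ l', f l' l b * R p l' = -∑ l', f l l' b * R p l' := by
      rw [← Finset.sum_neg_distrib]
      exact Finset.sum_congr rfl fun l' _ => by rw [hanti l' l b]; ring
    rw [c1, c2]
    ring
  have lhs5 : ∑ l, ∑ p, (∑ a, (f p l a * R a b + Mmat f B l a * D p a b)) * E l p
      = ∑ z : Q5 n, f z.2.2.1 z.2.2.2.1 b * R z.2.1 z.2.2.1
          * (G z.1 z.2.2.2.2 * R z.2.2.2.2 z.2.2.2.1) * E z.1 z.2.1 := by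
    rw [← nest5' (fun l p l' q a => f l' q b * R p l' * (G l a * R a q) * E l p)]
    refine Finset.sum_congr rfl fun l _ => Finset.sum_congr rfl fun p _ => ?_
    rw [stepA l p, Finset.sum_mul]
    refine Finset.sum_congr rfl fun l' _ => ?_
    rw [Finset.sum_mul]
    refine Finset.sum_congr rfl fun q _ => ?_
    rw [Finset.sum_mul]
  set T1 : ℝ := ∑ z : Q5 n, f z.1 z.2.1 b * R z.2.2.1 z.1 * R z.2.2.2.1 z.2.1
      * (G z.2.2.2.2 z.2.2.1 * E z.2.2.2.2 z.2.2.2.1) with hT1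
  set T2 : ℝ := ∑ z : Q5 n, f z.1 z.2.1 b * R z.2.2.1 z.1 * R z.2.2.2.1 z.2.1
      * (G z.2.2.2.2 z.2.2.2.1 * E z.2.2.2.2 z.2.2.1) with hT2
  have hrhs : ∑ r, ∑ t, ∑ q, ∑ l, ∑ p, f r t b * R q r * R l t *
      (G p q * E p l - G p l * E p q) = T1 - T2 := by
    rw [nest5' (fun r t q l p => f r t b * R q r * R l t * (G p q * E p l - G p l * E p q)),
      hT1, hT2, ← Finset.sum_sub_distrib]
    exact Finset.sum_congr rfl fun z _ => by ring
  have hT2T1 : T2 = -T1 := by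
    rw [hT1, hT2, ← Finset.sum_neg_distrib]
    refine Fintype.sum_equiv ⟨fun z => (z.2.1, z.1, z.2.2.2.1, z.2.2.1, z.2.2.2.2),
      fun z => (z.2.1, z.1, z.2.2.2.1, z.2.2.1, z.2.2.2.2),
      fun z => by rfl, fun z => by rfl⟩ _ _ fun z => ?_
    simp only [Equiv.coe_fn_mk]
    rw [hanti z.1 z.2.1 b]
    ring
  have hLT1 : ∑ z : Q5 n, f z.2.2.1 z.2.2.2.1 b * R z.2.1 z.2.2.1
      * (G z.1 z.2.2.2.2 * R z.2.2.2.2 z.2.2.2.1) * E z.1 z.2.1 = -T1 := by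
    rw [hT1, ← Finset.sum_neg_distrib]
    refine Fintype.sum_equiv ⟨fun z => (z.2.2.2.1, z.2.2.1, z.2.2.2.2, z.2.1, z.1),
      fun z => (z.2.2.2.2, z.2.2.2.1, z.2.1, z.1, z.2.2.1),
      fun z => by rfl, fun z => by rfl⟩ _ _ fun z => ?_
    simp only [Equiv.coe_fn_mk]
    rw [hanti z.2.2.1 z.2.2.2.1 b]
    ring
  rw [lhs5, hrhs, hT2T1, hLT1]
  ring

end Alg

theorem stmt14 {n : ℕ} (hn : 1 ≤ n) (f : Fin n → Fin n → Fin n → ℝ)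
    (hf : IsStructureConstants f)
    (γ : (Fin n → ℝ) → Matrix (Fin n) (Fin n) ℝ)
    (hγ : ∀ i j, ContDiff ℝ 1 (fun A => γ A i j))
    (hc : ∀ A : Fin n → ℝ, IsUnit (γ A - Mmat f A))
    (ρ : (Fin n → ℝ) → Matrix (Fin n) (Fin n) ℝ)
    (hρdef : ∀ A, ρ A = (γ A - Mmat f A)⁻¹)
    (hi : ∀ (B : Fin n → ℝ) (b r s : Fin n),
      pd s (fun C => ρ C r b) B - pd r (fun C => ρ C s b) B
        = ∑ l, ∑ q, f l q b * ρ B s l * ρ B r q)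
    (hii : ∀ (B : Fin n → ℝ) (p s b : Fin n),
      -(∑ r, ∑ j, f p j r * B j * pd r (fun C => ρ C s b) B)
        = (∑ q, f p s q * ρ B q b) - ∑ l, f p l b * ρ B s l) :
    ∀ (A : (Fin n → ℝ) → Fin n → ℝ), ContDiff ℝ (⊤ : ℕ∞) A →
      ∀ (x : Fin n → ℝ) (b : Fin n),
        ∑ l, ∑ a, pd l (fun y => γ (A y) l a * ρ (A y) a b) x
          = -(1/2) * ∑ r, ∑ t, ∑ q, ∑ l, ∑ p, f r t b * ρ (A x) q r * ρ (A x) l t *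
              (γ (A x) p q * pd p (fun y => A y l) x
                - γ (A x) p l * pd p (fun y => A y q) x) := by
  intro A hA x b
  have hAd : DifferentiableAt ℝ A x := (hA.differentiable (by simp)).differentiableAt
  -- smoothness of the various entry functions
  have hMent : ∀ l a, ContDiff ℝ 1 (fun C => Mmat f C l a) := by
    intro l a
    show ContDiff ℝ 1 (fun C : Fin n → ℝ => ∑ i, f i l a * C i)
    exact ContDiff.sum fun i _ => contDiff_const.mul (contDiff_coord' i)
  have hNent : ∀ i j, ContDiff ℝ 1 (fun C => (γ C - Mmat f C) i j) := by
    intro i j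
    exact (hγ i j).sub (hMent i j)
  have hdet : ContDiff ℝ 1 (fun C => (γ C - Mmat f C).det) :=
    contDiff_det' _ hNent
  have hdetne : ∀ C, (γ C - Mmat f C).det ≠ 0 := fun C =>
    ((Matrix.isUnit_iff_isUnit_det _).mp (hc C)).ne_zero
  have hadj : ∀ a c, ContDiff ℝ 1 (fun C => (γ C - Mmat f C).adjugate a c) := by
    intro a c
    simp only [Matrix.adjugate_apply]
    apply contDiff_det'
    intro i j
    have e : (fun C => ((γ C - Mmat f C).updateRow c (Pi.single a 1)) i j)
        = fun C => if i = c then (Pi.single a 1 : Fin n → ℝ) j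
            else (γ C - Mmat f C) i j := by
      funext C; rw [Matrix.updateRow_apply]
    rw [e]
    by_cases h : i = c
    · simp only [h, if_pos rfl]; exact contDiff_const
    · simp only [if_neg h]; exact hNent i j
  have hρent : ∀ a c, ContDiff ℝ 1 (fun C => ρ C a c) := by
    intro a c
    have e : (fun C => ρ C a c)
        = fun C => ((γ C - Mmat f C).det)⁻¹ * (γ C - Mmat f C).adjugate a c := by
      funext C
      rw [hρdef C, Matrix.inv_def]
      simp [Ring.inverse_eq_inv', Matrix.smul_apply, smul_eq_mul]
    rw [e]
    exact (hdet.inv hdetne).mul (hadj a c)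
  -- the basic matrix identity
  have h3C : ∀ C l q, ∑ a, (γ C l a - Mmat f C l a) * ρ C a q
      = if l = q then (1:ℝ) else 0 := by
    intro C l q
    have hinv : (γ C - Mmat f C) * ρ C = 1 := by
      rw [hρdef C]
      exact Matrix.mul_nonsing_inv _ ((Matrix.isUnit_iff_isUnit_det _).mp (hc C))
    have h := congrArg (fun M : Matrix (Fin n) (Fin n) ℝ => M l q) hinv
    simpa [Matrix.mul_apply, Matrix.one_apply, Matrix.sub_apply] using h
  -- differentiability at the relevant points
  have hγdA : ∀ i j, DifferentiableAt ℝ (fun C => γ C i j) (A x) :=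
    fun i j => ((hγ i j).differentiable one_ne_zero) _
  have hρdA : ∀ a c, DifferentiableAt ℝ (fun C => ρ C a c) (A x) :=
    fun a c => ((hρent a c).differentiable one_ne_zero) _
  have hMdA : ∀ l a, DifferentiableAt ℝ (fun C => Mmat f C l a) (A x) :=
    fun l a => ((hMent l a).differentiable one_ne_zero) _
  have hγcomp : ∀ i j, DifferentiableAt ℝ (fun y => γ (A y) i j) x := by
    intro i j
    exact DifferentiableAt.comp x (hγdA i j) hAd
  have hρcomp : ∀ a c, DifferentiableAt ℝ (fun y => ρ (A y) a c) x := by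
    intro a c
    exact DifferentiableAt.comp x (hρdA a c) hAd
  -- main computation
  have step1 : ∑ l, ∑ a, pd l (fun y => γ (A y) l a * ρ (A y) a b) x
      = ∑ l, pd l (fun y => ∑ a, γ (A y) l a * ρ (A y) a b) x := by
    refine Finset.sum_congr rfl fun l _ => ?_
    rw [pd_sum' l Finset.univ (fun a => fun y => γ (A y) l a * ρ (A y) a b) x
      (fun a _ => (hγcomp l a).mul (hρcomp a b))]
  have step2 : ∀ l, (fun y => ∑ a, γ (A y) l a * ρ (A y) a b)
      = fun y => (if l = b then (1:ℝ) else 0) + ∑ a, Mmat f (A y) l a * ρ (A y) a b := by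
    intro l
    funext y
    have h := h3C (A y) l b
    have e : ∑ a, (γ (A y) l a - Mmat f (A y) l a) * ρ (A y) a b
        = (∑ a, γ (A y) l a * ρ (A y) a b) - ∑ a, Mmat f (A y) l a * ρ (A y) a b := by
      rw [← Finset.sum_sub_distrib]
      exact Finset.sum_congr rfl fun a _ => by ring
    rw [e] at h
    linarith
  have hgC : ∀ l, ContDiff ℝ 1 (fun C => ∑ a, Mmat f C l a * ρ C a b) :=
    fun l => ContDiff.sum fun a _ => (hMent l a).mul (hρent a b)
  have step3 : ∑ l, pd l (fun y => ∑ a, γ (A y) l a * ρ (A y) a b) x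
      = ∑ l, pd l (fun y => ∑ a, Mmat f (A y) l a * ρ (A y) a b) x := by
    refine Finset.sum_congr rfl fun l _ => ?_
    rw [step2 l]
    exact pd_const_add' l _ _ x
  have step4 : ∑ l, pd l (fun y => ∑ a, Mmat f (A y) l a * ρ (A y) a b) x
      = ∑ l, ∑ p, pd p (fun C => ∑ a, Mmat f C l a * ρ C a b) (A x)
          * pd l (fun y => A y p) x := by
    refine Finset.sum_congr rfl fun l _ => ?_
    exact pd_comp' l (fun C => ∑ a, Mmat f C l a * ρ C a b) A x
      (((hgC l).differentiable one_ne_zero) _) hAd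
  have step5 : ∀ l p, pd p (fun C => ∑ a, Mmat f C l a * ρ C a b) (A x)
      = ∑ a, (f p l a * ρ (A x) a b
          + Mmat f (A x) l a * pd p (fun C => ρ C a b) (A x)) := by
    intro l p
    rw [pd_sum' p Finset.univ (fun a => fun C => Mmat f C l a * ρ C a b) (A x)
      (fun a _ => (hMdA l a).mul (hρdA a b))]
    refine Finset.sum_congr rfl fun a _ => ?_
    rw [pd_mul' p _ _ (A x) (hMdA l a) (hρdA a b)]
    have hM : (fun C => Mmat f C l a) = fun C : Fin n → ℝ => ∑ i, f i l a * C i := rfl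
    rw [hM, pd_linear' p (fun i => f i l a) (A x)]
  rw [step1, step3, step4]
  have step6 : ∑ l, ∑ p, pd p (fun C => ∑ a, Mmat f C l a * ρ C a b) (A x)
      * pd l (fun y => A y p) x
      = ∑ l, ∑ p, (∑ a, (f p l a * ρ (A x) a b
          + Mmat f (A x) l a * pd p (fun C => ρ C a b) (A x)))
        * pd l (fun y => A y p) x := by
    refine Finset.sum_congr rfl fun l _ => Finset.sum_congr rfl fun p _ => ?_
    rw [step5 l p]
  rw [step6]
  exact algebra_step' f hf.1 (A x) (γ (A x)) (ρ (A x))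
    (fun s r c => pd s (fun C => ρ C r c) (A x))
    (fun l p => pd l (fun y => A y p) x) b
    (fun c r s => hi (A x) c r s) (fun p s c => hii (A x) p s c)
    (fun l q => h3C (A x) l q)
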